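/- Let A and B be real numbers with A > B > −1, let ρ > 0 and let 0 < η < ρ². Then the function t ↦ (ρ² − t²)^{A−B−1} t^{2B+1} (1 − η/t²)^{B} is (Lebesgue) integrable on the interval (√η, ρ), and one has the identity (1 − η/ρ²)^{A} = [2 Γ(A+1) / (Γ(B+1) Γ(A−B))] · ρ^{−2A} ∫_{√η}^{ρ} (ρ² − t²)^{A−B−1} t^{2B+1} (1 − η/t²)^{B} dt, where Γ denotes the real Gamma function. -/

import Mathlib

/-!
Substituting `u = t²` and then `u = η + (ρ² - η) x` turns the integral into `(ρ² - η)^A / 2`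
times the Beta integral `∫₀¹ x^B (1 - x)^(A-B-1) dx = Γ(B + 1) Γ(A - B) / Γ(A + 1)`,
while `(1 - η/ρ²)^A = (ρ² - η)^A ρ^(-2A)`.
-/

open MeasureTheory Set Real

section HasSetIntegral

variable {α : Type*} [MeasurableSpace α] {μ : Measure α} {f g : α → ℝ} {s : Set α} {I : ℝ}

def HasSetIntegral (f : α → ℝ) (s : Set α) (μ : Measure α) (I : ℝ) : Prop :=
  IntegrableOn f s μ ∧ ∫ x in s, f x ∂μ = I

theorem HasSetIntegral.congr (h : HasSetIntegral f s μ I) (hs : MeasurableSet s)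
    (hfg : EqOn f g s) : HasSetIntegral g s μ I :=
  ⟨h.1.congr_fun hfg hs, (setIntegral_congr_fun hs hfg).symm.trans h.2⟩

theorem HasSetIntegral.const_mul (h : HasSetIntegral f s μ I) (c : ℝ) :
    HasSetIntegral (fun x => c * f x) s μ (c * I) :=
  ⟨h.1.const_mul c, by rw [integral_const_mul, h.2]⟩

end HasSetIntegral

theorem hasSetIntegral_image_iff {s : Set ℝ} {φ φ' g : ℝ → ℝ} {I : ℝ} (hs : MeasurableSet s)
    (hφ' : ∀ x ∈ s, HasDerivWithinAt φ (φ' x) s x) (hφ : InjOn φ s) :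
    HasSetIntegral g (φ '' s) volume I ↔
      HasSetIntegral (fun x => |φ' x| * g (φ x)) s volume I := by
  simp only [HasSetIntegral, ← smul_eq_mul,
    integrableOn_image_iff_integrableOn_abs_deriv_smul hs hφ' hφ,
    integral_image_eq_integral_abs_deriv_smul hs hφ' hφ]

theorem hasSetIntegral_beta {u v : ℝ} (hu : 0 < u) (hv : 0 < v) :
    HasSetIntegral (fun x => x ^ (u - 1) * (1 - x) ^ (v - 1)) (Ioo 0 1) volume
      (Gamma u * Gamma v / Gamma (u + v)) := by
  have hu' : 0 < (u : ℂ).re := by simpa using hu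
  have hv' : 0 < (v : ℂ).re := by simpa using hv
  have hcast : EqOn (fun x : ℝ => (x : ℂ) ^ ((u : ℂ) - 1) * (1 - (x : ℂ)) ^ ((v : ℂ) - 1))
      (fun x => ((x ^ (u - 1) * (1 - x) ^ (v - 1) : ℝ) : ℂ)) (Icc 0 1) := fun x hx => by
    simp only [Complex.ofReal_mul, Complex.ofReal_cpow hx.1,
      Complex.ofReal_cpow (sub_nonneg.2 hx.2), Complex.ofReal_sub, Complex.ofReal_one]
  have hint : IntegrableOn (fun x : ℝ => x ^ (u - 1) * (1 - x) ^ (v - 1)) (Ioo 0 1) := by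
    have := ((intervalIntegrable_iff_integrableOn_Ioc_of_le zero_le_one).mp
      (Complex.betaIntegral_convergent hu' hv')).mono_set Ioo_subset_Ioc_self
    refine IntegrableOn.congr_fun this.re (fun x hx => ?_) measurableSet_Ioo
    simp [hcast (Ioo_subset_Icc_self hx)]
  refine ⟨hint, ?_⟩
  have hbeta : Complex.betaIntegral u v
      = ((∫ x in (0 : ℝ)..1, x ^ (u - 1) * (1 - x) ^ (v - 1) : ℝ) : ℂ) := by
    rw [Complex.betaIntegral, ← intervalIntegral.integral_ofReal]
    exact intervalIntegral.integral_congr (by simpa [uIcc_of_le zero_le_one] using hcast)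
  have hG := Complex.Gamma_mul_Gamma_eq_betaIntegral hu' hv'
  rw [hbeta, ← Complex.ofReal_add, Complex.Gamma_ofReal, Complex.Gamma_ofReal,
    Complex.Gamma_ofReal] at hG
  have hGR : Gamma u * Gamma v
      = Gamma (u + v) * ∫ x in Ioo (0 : ℝ) 1, x ^ (u - 1) * (1 - x) ^ (v - 1) := by
    rw [← integral_Ioc_eq_integral_Ioo, ← intervalIntegral.integral_of_le zero_le_one]
    exact_mod_cast hG
  rw [hGR, mul_div_cancel_left₀ _ (Gamma_pos_of_pos (add_pos hu hv)).ne']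

theorem hasSetIntegral_sub_rpow_mul_sub_rpow {a b p q : ℝ} (hab : a < b) (hp : -1 < p)
    (hq : -1 < q) :
    HasSetIntegral (fun u => (b - u) ^ p * (u - a) ^ q) (Ioo a b) volume
      ((b - a) ^ (p + q + 1) * (Gamma (q + 1) * Gamma (p + 1) / Gamma (p + q + 2))) := by
  have hc : 0 < b - a := sub_pos.2 hab
  have himage : (fun x => (b - a) * x + a) '' Ioo 0 1 = Ioo a b := by
    rw [image_affine_Ioo hc]; ring_nf
  have hderiv : ∀ x ∈ Ioo (0 : ℝ) 1,
      HasDerivWithinAt (fun x => (b - a) * x + a) (b - a) (Ioo 0 1) x := fun x _ => by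
    simpa using (((hasDerivAt_id x).const_mul (b - a)).add_const a).hasDerivWithinAt
  have hinj : InjOn (fun x => (b - a) * x + a) (Ioo 0 1) := fun x _ y _ h => by
    simpa [hc.ne'] using h
  rw [← himage, hasSetIntegral_image_iff measurableSet_Ioo hderiv hinj]
  have hbeta := (hasSetIntegral_beta (u := q + 1) (v := p + 1) (by linarith)
    (by linarith)).const_mul ((b - a) ^ (p + q + 1))
  rw [show q + 1 + (p + 1) = p + q + 2 by ring] at hbeta
  refine hbeta.congr measurableSet_Ioo fun x hx => ?_
  have hx1 : 0 ≤ 1 - x := sub_nonneg.2 hx.2.le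
  simp only [add_sub_cancel_right, abs_of_pos hc,
    show b - ((b - a) * x + a) = (b - a) * (1 - x) by ring]
  rw [mul_rpow hc.le hx1, mul_rpow hc.le hx.1.le, rpow_add hc, rpow_add hc, rpow_one]
  ring

theorem rpow_two_mul_add_one_mul_one_sub_div_sq_rpow {t η : ℝ} (B : ℝ) (ht : 0 < t)
    (hη : η ≤ t ^ 2) : t ^ (2 * B + 1) * (1 - η / t ^ 2) ^ B = t * (t ^ 2 - η) ^ B := by
  have ht2 : 0 < t ^ 2 := by positivity
  have hsq_rpow : (t ^ 2) ^ B = t ^ (2 * B) := by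
    rw [← rpow_natCast, ← rpow_mul ht.le, Nat.cast_ofNat]
  rw [show 1 - η / t ^ 2 = (t ^ 2 - η) / t ^ 2 by field_simp, div_rpow (by linarith) ht2.le,
    hsq_rpow, rpow_add ht, rpow_one]
  field_simp

theorem hasSetIntegral_subordination {A B ρ η : ℝ} (hAB : B < A) (hB : -1 < B) (hρ : 0 < ρ)
    (hη₀ : 0 < η) (hη : η < ρ ^ 2) :
    HasSetIntegral
      (fun t => (ρ ^ 2 - t ^ 2) ^ (A - B - 1) * t ^ (2 * B + 1) * (1 - η / t ^ 2) ^ B)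
      (Ioo (√η) ρ) volume
      ((ρ ^ 2 - η) ^ A * (Gamma (B + 1) * Gamma (A - B) / Gamma (A + 1)) / 2) := by
  have hmono : StrictMonoOn (fun t : ℝ => t ^ 2) (Icc (√η) ρ) :=
    (pow_left_strictMonoOn₀ two_ne_zero).mono fun t ht => (sqrt_nonneg η).trans ht.1
  have himage : (fun t : ℝ => t ^ 2) '' Ioo (√η) ρ = Ioo η (ρ ^ 2) := by
    rw [(continuous_pow 2).continuousOn.image_Ioo_of_strictMonoOn
      ((sqrt_lt' hρ).2 hη).le hmono, sq_sqrt hη₀.le]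
  have hderiv : ∀ t ∈ Ioo (√η) ρ,
      HasDerivWithinAt (fun t : ℝ => t ^ 2) (2 * t) (Ioo (√η) ρ) t := fun t _ => by
    simpa using (hasDerivAt_pow 2 t).hasDerivWithinAt
  have hsq := hasSetIntegral_sub_rpow_mul_sub_rpow hη (by linarith : -1 < A - B - 1) hB
  rw [show A - B - 1 + B + 1 = A by ring, show A - B - 1 + 1 = A - B by ring,
    show A - B - 1 + B + 2 = A + 1 by ring, ← himage,
    hasSetIntegral_image_iff measurableSet_Ioo hderiv (hmono.injOn.mono Ioo_subset_Icc_self)]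
    at hsq
  rw [div_eq_inv_mul]
  refine (hsq.const_mul 2⁻¹).congr measurableSet_Ioo fun t ht => ?_
  have ht0 : 0 < t := (sqrt_nonneg η).trans_lt ht.1
  have htη : η ≤ t ^ 2 := ((sqrt_lt' ht0).1 ht.1).le
  simp only [abs_of_pos (by positivity : 0 < 2 * t), mul_assoc,
    rpow_two_mul_add_one_mul_one_sub_div_sq_rpow B ht0 htη]
  ring

theorem one_sub_div_sq_rpow {ρ η : ℝ} (A : ℝ) (hρ : 0 < ρ) (hη : η ≤ ρ ^ 2) :
    (1 - η / ρ ^ 2) ^ A = (ρ ^ 2 - η) ^ A * ρ ^ (-(2 * A)) := by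
  have hsq_rpow : (ρ ^ 2) ^ A = ρ ^ (2 * A) := by
    rw [← rpow_natCast, ← rpow_mul hρ.le, Nat.cast_ofNat]
  rw [show 1 - η / ρ ^ 2 = (ρ ^ 2 - η) / ρ ^ 2 by field_simp, div_rpow (by linarith)
    (by positivity), hsq_rpow, rpow_neg hρ.le, div_eq_mul_inv]

/-- Stein–Weiss subordination formula: for `A > B > -1`, `ρ > 0`, `0 < η < ρ²`,
the function `t ↦ (ρ² − t²)^{A−B−1} t^{2B+1} (1 − η/t²)^B` is integrable on
`(√η, ρ)` and
`(1 − η/ρ²)^A = (2Γ(A+1)/(Γ(B+1)Γ(A−B))) · ρ^{−2A} ∫_{√η}^{ρ} (ρ²−t²)^{A−B−1} t^{2B+1} (1−η/t²)^B dt`. -/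
theorem stmt5 (A B ρ η : ℝ) (hAB : B < A) (hB : -1 < B) (hρ : 0 < ρ)
    (hη₀ : 0 < η) (hη : η < ρ ^ 2) :
    IntegrableOn
        (fun t : ℝ => (ρ ^ 2 - t ^ 2) ^ (A - B - 1) * t ^ (2 * B + 1) * (1 - η / t ^ 2) ^ B)
        (Set.Ioo (Real.sqrt η) ρ) volume ∧
      (1 - η / ρ ^ 2) ^ A =
        (2 * Real.Gamma (A + 1) / (Real.Gamma (B + 1) * Real.Gamma (A - B))) *
          ρ ^ (-(2 * A)) *
          ∫ t in Set.Ioo (Real.sqrt η) ρ,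
            (ρ ^ 2 - t ^ 2) ^ (A - B - 1) * t ^ (2 * B + 1) * (1 - η / t ^ 2) ^ B := by
  obtain ⟨hint, hval⟩ := hasSetIntegral_subordination hAB hB hρ hη₀ hη
  refine ⟨hint, ?_⟩
  have hΓB : Gamma (B + 1) ≠ 0 := (Gamma_pos_of_pos (by linarith)).ne'
  have hΓAB : Gamma (A - B) ≠ 0 := (Gamma_pos_of_pos (by linarith)).ne'
  have hΓA : Gamma (A + 1) ≠ 0 := (Gamma_pos_of_pos (by linarith)).ne'
  rw [hval, one_sub_div_sq_rpow A hρ hη.le]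
  field_simp
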